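/- arXiv:1301.0356 — 3 statements merged into one kernel-verified Lean document; each statement's English description precedes it below -/
import Mathlib

section
/- Let A be a unital C*-algebra and let w : [0,1] → A be a continuous path of unitaries in A which is rectifiable of length r ≤ π/2, i.e., the supremum over all partitions 0 = t_0 < t_1 < … < t_k = 1 of the sums Σ_{i} ‖w(t_{i+1}) − w(t_i)‖ equals r. Then for every λ in the spectrum of w(0) there exists a continuous function t ↦ λ(t) from [0,1] into the unit circle of ℂ such that λ(0) = λ, λ(t) belongs to the spectrum of w(t) for every t ∈ [0,1], and the length of the path t ↦ λ(t) (the supremum over all partitions of Σ_i |λ(t_{i+1}) − λ(t_i)|) is at most r. -/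
/-!
For a normal element `b` of a C*-algebra, `‖(μ - b)⁻¹‖ ≤ 1 / dist(μ, σ(b))`, so by a Neumann
series every point of `σ(a)` lies within `‖a - b‖` of `σ(b)`. Writing `F t` for the length of `w`
on `[0, t]`, a point of `σ(w s)` therefore has a point of `σ(w t)` within `F t - F s`. Chaining
such choices along the grids `{k / n}` gives step selections; they stay in a compact ball, so
their pointwise limit along an ultrafilter is a selection `λ` with `|λ s - λ t| ≤ |F s - F t|`.
It is continuous because `F` is, and its length is at most `F 1 - F 0 = r`.
-/

open Set Filter Topology Metric

section Spectrum

variable {A : Type*} [CStarAlgebra A]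

theorem IsStarNormal.norm_resolvent_le {b : A} [IsStarNormal b] {μ : ℂ}
    (hμ : μ ∉ spectrum ℂ b) : ‖resolvent b μ‖ ≤ (infDist μ (spectrum ℂ b))⁻¹ := by
  nontriviality A
  have hd : 0 < infDist μ (spectrum ℂ b) :=
    ((spectrum.isClosed b).notMem_iff_infDist_pos (spectrum.nonempty b)).1 hμ
  have hcfc : resolvent b μ = cfc (fun z ↦ (μ - z)⁻¹) b := by
    rw [cfc_inv (fun z ↦ μ - z) b (fun z hz h ↦ hμ (sub_eq_zero.1 h ▸ hz)),
      cfc_sub (fun _ : ℂ ↦ μ) (fun z ↦ z) b, cfc_const μ b, cfc_id' ℂ b, resolvent]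
  rw [hcfc]
  refine norm_cfc_le (inv_nonneg.2 hd.le) fun z hz ↦ ?_
  rw [norm_inv, ← dist_eq_norm]
  exact inv_anti₀ hd (infDist_le_dist_of_mem hz)

theorem exists_mem_spectrum_dist_le_norm_sub {a b : A} [IsStarNormal b] {μ : ℂ}
    (hμ : μ ∈ spectrum ℂ a) : ∃ ν ∈ spectrum ℂ b, dist μ ν ≤ ‖a - b‖ := by
  rcases subsingleton_or_nontrivial A with _ | _
  · simp [spectrum.of_subsingleton] at hμ
  obtain ⟨ν, hν, hdist⟩ := (spectrum.isCompact b).exists_infDist_eq_dist (spectrum.nonempty b) μ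
  refine ⟨ν, hν, ?_⟩
  by_contra! hlt
  rw [← hdist] at hlt
  have hμb : μ ∉ spectrum ℂ b := fun h ↦
    (norm_nonneg (a - b)).not_gt (by rwa [infDist_zero_of_mem h] at hlt)
  obtain ⟨u, hu⟩ := spectrum.notMem_iff.1 hμb
  have hnear : ‖(algebraMap ℂ A μ - a) - u‖ < ‖(↑u⁻¹ : A)‖⁻¹ := by
    rw [hu, sub_sub_sub_cancel_left, norm_sub_rev]
    calc ‖a - b‖ < infDist μ (spectrum ℂ b) := hlt
      _ ≤ ‖(↑u⁻¹ : A)‖⁻¹ := by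
        rw [le_inv_comm₀ (by linarith [norm_nonneg (a - b)]) (Units.norm_pos u⁻¹),
          ← Ring.inverse_unit, hu]
        exact IsStarNormal.norm_resolvent_le hμb
  exact hμ (u.ofNearby _ hnear).isUnit

end Spectrum

section Variation

variable {α : Type*} [LinearOrder α] {E : Type*} [PseudoMetricSpace E]

theorem LocallyBoundedVariationOn.dist_le_variationOnFromTo_sub {f : α → E} {s : Set α}
    (hf : LocallyBoundedVariationOn f s) {a b c : α} (ha : a ∈ s) (hb : b ∈ s) (hc : c ∈ s)
    (hbc : b ≤ c) :
    dist (f b) (f c) ≤ variationOnFromTo f s a c - variationOnFromTo f s a b := by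
  rw [← variationOnFromTo.add hf ha hb hc, add_sub_cancel_left, variationOnFromTo.eq_of_le f s hbc]
  exact (hf b c hb hc).dist_le ⟨hb, le_rfl, hbc⟩ ⟨hc, hbc, le_rfl⟩

theorem LocallyBoundedVariationOn.continuous_variationOnFromTo [TopologicalSpace α]
    [OrderTopology α] {f : α → E} (hf : LocallyBoundedVariationOn f univ) (hcont : Continuous f)
    (a : α) : Continuous (variationOnFromTo f univ a) := by
  refine continuous_iff_continuousAt.2 fun b ↦ continuousAt_iff_continuous_left'_right'.2 ⟨?_, ?_⟩
  · simpa [ContinuousWithinAt] using variationOnFromTo.tendsto_left (mem_univ a) (mem_univ b) hf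
      (hcont.continuousAt.mono_left nhdsWithin_le_nhds)
  · simpa [ContinuousWithinAt] using variationOnFromTo.tendsto_right (mem_univ a) (mem_univ b) hf
      (hcont.continuousAt.mono_left nhdsWithin_le_nhds)

theorem eVariationOn_le_of_edist_le {E' : Type*} [PseudoEMetricSpace E'] {f : α → E} {g : α → E'}
    {s : Set α} (h : ∀ x ∈ s, ∀ y ∈ s, edist (f x) (f y) ≤ edist (g x) (g y)) :
    eVariationOn f s ≤ eVariationOn g s :=
  iSup_mono fun p ↦ Finset.sum_le_sum fun _ _ ↦ h _ (p.2.2.2 _) _ (p.2.2.2 _)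

theorem LocallyBoundedVariationOn.eVariationOn_le_of_dist_le [OrderBot α] [OrderTop α]
    {E' : Type*} [PseudoMetricSpace E'] {f : α → E} {g : α → E'}
    (hf : LocallyBoundedVariationOn f univ)
    (h : ∀ s t, dist (g s) (g t) ≤
      dist (variationOnFromTo f univ ⊥ s) (variationOnFromTo f univ ⊥ t)) :
    eVariationOn g univ ≤ eVariationOn f univ := by
  set F := variationOnFromTo f univ ⊥
  have hIcc : univ ∩ Icc (⊥ : α) ⊤ = univ := by simp
  calc eVariationOn g univ ≤ eVariationOn F univ :=
        eVariationOn_le_of_edist_le fun s _ t _ ↦ by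
          simpa only [edist_dist] using ENNReal.ofReal_le_ofReal (h s t)
    _ = ENNReal.ofReal (F ⊤ - F ⊥) := by
        rw [← (variationOnFromTo.monotoneOn hf (mem_univ ⊥)).eVariationOn_eq (mem_univ _)
          (mem_univ _), hIcc]
    _ ≤ eVariationOn f univ := by
        rw [show F ⊥ = 0 from variationOnFromTo.self _ _ _, sub_zero,
          show F ⊤ = _ from variationOnFromTo.eq_of_le _ _ bot_le, hIcc]
        exact ENNReal.ofReal_toReal_le

end Variation

theorem exists_chain_dist_le_sub {T X : Type*} [Preorder T] [PseudoMetricSpace X]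
    {K : T → Set X} {F : T → ℝ}
    (hstep : ∀ s t, s ≤ t → ∀ x ∈ K s, ∃ y ∈ K t, dist x y ≤ F t - F s)
    {p : ℕ → T} (hp : Monotone p) {x₀ : X} (hx₀ : x₀ ∈ K (p 0)) :
    ∃ c : ℕ → X, c 0 = x₀ ∧ (∀ k, c k ∈ K (p k)) ∧
      ∀ i j, i ≤ j → dist (c i) (c j) ≤ F (p j) - F (p i) := by
  have : Nonempty X := ⟨x₀⟩
  choose! next hnext_mem hnext_dist using hstep
  let c : ℕ → X := fun k ↦ Nat.rec x₀ (fun k x ↦ next (p k) (p (k + 1)) x) k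
  have hmem : ∀ k, c k ∈ K (p k) := by
    intro k
    induction k with
    | zero => exact hx₀
    | succ k ih => exact hnext_mem _ _ (hp k.le_succ) _ ih
  refine ⟨c, rfl, hmem, fun i j hij ↦ ?_⟩
  induction j, hij using Nat.le_induction with
  | base => simp
  | succ j _ ih =>
    calc dist (c i) (c (j + 1)) ≤ dist (c i) (c j) + dist (c j) (c (j + 1)) := dist_triangle _ _ _
      _ ≤ (F (p j) - F (p i)) + (F (p (j + 1)) - F (p j)) :=
        add_le_add ih (hnext_dist _ _ (hp j.le_succ) _ (hmem j))
      _ = F (p (j + 1)) - F (p i) := by ring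

namespace unitInterval

noncomputable def gridPoint (n k : ℕ) : unitInterval := projIcc 0 1 zero_le_one (k / n)

theorem monotone_gridPoint (n : ℕ) : Monotone (gridPoint n) :=
  fun _ _ h ↦ monotone_projIcc _ (div_le_div_of_nonneg_right (Nat.cast_le.2 h) n.cast_nonneg)

@[simp]
theorem gridPoint_zero (n : ℕ) : gridPoint n 0 = 0 := by
  simp [gridPoint]

theorem gridPoint_floor_le (n : ℕ) (t : unitInterval) : gridPoint n ⌊(t : ℝ) * n⌋₊ ≤ t := by
  refine (monotone_projIcc zero_le_one ?_).trans_eq (projIcc_val zero_le_one t)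
  exact div_le_of_le_mul₀ n.cast_nonneg t.2.1 (Nat.floor_le (mul_nonneg t.2.1 n.cast_nonneg))

theorem tendsto_gridPoint_floor (t : unitInterval) :
    Tendsto (fun n : ℕ ↦ gridPoint n ⌊(t : ℝ) * n⌋₊) atTop (𝓝 t) := by
  have := ((continuous_projIcc (h := zero_le_one)).tendsto _).comp
    ((tendsto_nat_floor_mul_div_atTop t.2.1).comp tendsto_natCast_atTop_atTop)
  rwa [projIcc_val] at this

end unitInterval

theorem dist_le_dist_of_dist_le_sub {α X : Type*} [LinearOrder α] [PseudoMetricSpace X]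
    {f : α → X} {F : α → ℝ} (h : ∀ s t, s ≤ t → dist (f s) (f t) ≤ F t - F s) (s t : α) :
    dist (f s) (f t) ≤ dist (F s) (F t) := by
  rw [Real.dist_eq]
  rcases le_total s t with hst | hts
  · exact (h s t hst).trans (abs_sub_comm (F s) (F t) ▸ le_abs_self _)
  · exact dist_comm (f s) (f t) ▸ (h t s hts).trans (le_abs_self _)

theorem continuous_of_dist_le_dist {α X : Type*} [PseudoMetricSpace α] [PseudoMetricSpace X]
    {f : α → X} {F : α → ℝ} (hF : Continuous F) (h : ∀ s t, dist (f s) (f t) ≤ dist (F s) (F t)) :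
    Continuous f :=
  Metric.continuous_iff.2 fun b ε hε ↦ (Metric.continuous_iff.1 hF b ε hε).imp
    fun _ hδ ↦ ⟨hδ.1, fun a ha ↦ (h a b).trans_lt (hδ.2 a ha)⟩

open unitInterval

theorem exists_step_selection {X : Type*} [PseudoMetricSpace X] {K : unitInterval → Set X}
    {F : unitInterval → ℝ} (hstep : ∀ s t, s ≤ t → ∀ x ∈ K s, ∃ y ∈ K t, dist x y ≤ F t - F s)
    {x₀ : X} (hx₀ : x₀ ∈ K 0) (n : ℕ) :
    ∃ g : unitInterval → X, g 0 = x₀ ∧ (∀ t : unitInterval, g t ∈ K (gridPoint n ⌊(t : ℝ) * n⌋₊)) ∧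
      ∀ s t : unitInterval, s ≤ t → dist (g s) (g t) ≤
        F (gridPoint n ⌊(t : ℝ) * n⌋₊) - F (gridPoint n ⌊(s : ℝ) * n⌋₊) := by
  obtain ⟨c, hc0, hcK, hc⟩ :=
    exists_chain_dist_le_sub hstep (monotone_gridPoint n) (x₀ := x₀) (by rwa [gridPoint_zero])
  exact ⟨fun t : unitInterval ↦ c ⌊(t : ℝ) * n⌋₊, by simpa using hc0, fun t ↦ hcK _,
    fun s t hst ↦ hc _ _ (Nat.floor_le_floor (mul_le_mul_of_nonneg_right hst n.cast_nonneg))⟩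

theorem exists_selection_dist_le_dist {X : Type*} [MetricSpace X] [ProperSpace X]
    {K : unitInterval → Set X} (hK : ∀ t, IsClosed (K t)) {F : unitInterval → ℝ}
    (hF : Continuous F) (hstep : ∀ s t, s ≤ t → ∀ x ∈ K s, ∃ y ∈ K t, dist x y ≤ F t - F s)
    {x₀ : X} (hx₀ : x₀ ∈ K 0) :
    ∃ γ : unitInterval → X, γ 0 = x₀ ∧ (∀ t, γ t ∈ K t) ∧
      ∀ s t, dist (γ s) (γ t) ≤ dist (F s) (F t) := by
  have hFm : Monotone F := fun s t hst ↦ by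
    obtain ⟨y, hy, -⟩ := hstep 0 s nonneg' x₀ hx₀
    obtain ⟨z, -, hyz⟩ := hstep s t hst y hy
    linarith [dist_nonneg (x := y) (y := z)]
  choose γₙ hγₙ0 hγₙK hγₙ using exists_step_selection hstep hx₀
  let τ : ℕ → unitInterval → unitInterval := fun n t ↦ gridPoint n ⌊(t : ℝ) * n⌋₊
  have hγₙ_ball : ∀ n t, γₙ n t ∈ closedBall x₀ (F 1 - F 0) := fun n t ↦ by
    have := hγₙ n 0 t nonneg'
    rw [hγₙ0, dist_comm] at this
    exact this.trans (by simpa [τ] using hFm (le_one' (t := τ n t)))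
  let U : Ultrafilter ℕ := .of atTop
  have hU : (U : Filter ℕ) ≤ atTop := Ultrafilter.of_le _
  have hlim : ∀ t, ∃ z, Tendsto (γₙ · t) U (𝓝 z) := fun t ↦ by
    obtain ⟨z, -, hz⟩ := (isCompact_closedBall x₀ (F 1 - F 0)).ultrafilter_le_nhds'
      (U.map (γₙ · t)) (Ultrafilter.mem_map.2 (univ_mem' (hγₙ_ball · t)))
    exact ⟨z, hz⟩
  choose γ hγ using hlim
  have hFτ : ∀ t, Tendsto (fun n ↦ F (τ n t)) U (𝓝 (F t)) := fun t ↦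
    ((hF.tendsto t).comp (tendsto_gridPoint_floor t)).mono_left hU
  refine ⟨γ, tendsto_nhds_unique (hγ 0) (by simp [hγₙ0]), fun t ↦ ?_,
    dist_le_dist_of_dist_le_sub fun s t hst ↦ ?_⟩
  · obtain ⟨y₀, hy₀, -⟩ := hstep 0 t nonneg' x₀ hx₀
    have hinf : ∀ n, infDist (γₙ n t) (K t) ≤ F t - F (τ n t) := fun n ↦ by
      obtain ⟨y, hy, hdy⟩ := hstep _ t (gridPoint_floor_le n t) _ (hγₙK n t)
      exact (infDist_le_dist_of_mem hy).trans hdy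
    rw [(hK t).mem_iff_infDist_zero ⟨y₀, hy₀⟩]
    refine le_antisymm ?_ infDist_nonneg
    simpa using le_of_tendsto_of_tendsto (((continuous_infDist_pt _).tendsto _).comp (hγ t))
      ((hFτ t).const_sub (F t)) (Eventually.of_forall hinf)
  · exact le_of_tendsto_of_tendsto ((hγ s).dist (hγ t)) ((hFτ t).sub (hFτ s))
      (Eventually.of_forall fun n ↦ hγₙ n s t hst)

theorem spectrum_path_selection_length_general (A : Type*) [CStarAlgebra A]
    (w : C(unitInterval, A)) (hw : ∀ t, w t ∈ unitary A)
    (r : ℝ)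
    (hlen : eVariationOn (⇑w) Set.univ = ENNReal.ofReal r)
    (lam₀ : ℂ) (hlam₀ : lam₀ ∈ spectrum ℂ (w 0)) :
    ∃ lam : C(unitInterval, ℂ), lam 0 = lam₀ ∧
      (∀ t, ‖lam t‖ = 1) ∧ (∀ t, lam t ∈ spectrum ℂ (w t)) ∧
      eVariationOn (⇑lam) Set.univ ≤ ENNReal.ofReal r := by
  have hbv : LocallyBoundedVariationOn w univ :=
    BoundedVariationOn.locallyBoundedVariationOn (by simp [BoundedVariationOn, hlen])
  set F := variationOnFromTo w univ ⊥
  have hF : Continuous F := hbv.continuous_variationOnFromTo w.continuous ⊥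
  have hstep : ∀ s t, s ≤ t → ∀ μ ∈ spectrum ℂ (w s), ∃ ν ∈ spectrum ℂ (w t),
      dist μ ν ≤ F t - F s := fun s t hst μ hμ ↦ by
    have := isStarNormal_of_mem_unitary (hw t)
    obtain ⟨ν, hν, hμν⟩ := exists_mem_spectrum_dist_le_norm_sub (b := w t) hμ
    rw [← dist_eq_norm] at hμν
    exact ⟨ν, hν, hμν.trans (hbv.dist_le_variationOnFromTo_sub (mem_univ ⊥) (mem_univ s)
      (mem_univ t) hst)⟩
  obtain ⟨γ, hγ0, hγK, hγF⟩ :=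
    exists_selection_dist_le_dist (fun t ↦ spectrum.isClosed (w t)) hF hstep hlam₀
  exact ⟨⟨γ, continuous_of_dist_le_dist hF hγF⟩, hγ0,
    fun t ↦ mem_sphere_zero_iff_norm.1 (spectrum.subset_circle_of_unitary (hw t) (hγK t)), hγK,
    (hbv.eVariationOn_le_of_dist_le hγF).trans hlen.le⟩

/-- Let `A` be a unital C*-algebra and let `w : [0,1] → A` be a continuous
path of unitaries which is rectifiable of length `r ≤ π/2` (the length being the total
variation, i.e. the supremum over partitions of the sums of norms of consecutive
differences). Then for every `λ` in the spectrum of `w 0` there is a continuous function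
`t ↦ λ(t)` into the unit circle with `λ(0) = λ`, `λ(t) ∈ spectrum (w t)` for all `t`, and
whose length (total variation) is at most `r`. -/
theorem spectrum_path_selection_length (A : Type*) [CStarAlgebra A]
    (w : C(unitInterval, A)) (hw : ∀ t, w t ∈ unitary A)
    (r : ℝ) (hr : r ≤ Real.pi / 2)
    (hlen : eVariationOn (⇑w) Set.univ = ENNReal.ofReal r)
    (lam₀ : ℂ) (hlam₀ : lam₀ ∈ spectrum ℂ (w 0)) :
    ∃ lam : C(unitInterval, ℂ), lam 0 = lam₀ ∧
      (∀ t, ‖lam t‖ = 1) ∧ (∀ t, lam t ∈ spectrum ℂ (w t)) ∧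
      eVariationOn (⇑lam) Set.univ ≤ ENNReal.ofReal r :=
  spectrum_path_selection_length_general A w hw r hlen lam₀ hlam₀
end

section
/- Let n ≥ 1 and let b_1, …, b_n be distinct real numbers in the half-open interval (−1/2, 1/2] whose sum Σ_{j=1}^n b_j is an integer. Then there exist real numbers a_1, …, a_n such that a_j − b_j is an integer for every j, Σ_{j=1}^n a_j = 0, |a_j| < 1 for every j, and max_j a_j − min_j a_j < 1. -/
open Finset

/-- Let `n ≥ 1` and let `b₁, …, bₙ` be distinct real numbers in
`(−1/2, 1/2]` whose sum is an integer. Then there are reals `a₁, …, aₙ` with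
`aⱼ − bⱼ ∈ ℤ` for all `j`, `Σⱼ aⱼ = 0`, `|aⱼ| < 1` for all `j`, and
`maxⱼ aⱼ − minⱼ aⱼ < 1`. -/
theorem recentering_of_circle_representatives (n : ℕ) (hn : 1 ≤ n)
    (b : Fin n → ℝ) (hb : Function.Injective b)
    (hmem : ∀ j, b j ∈ Set.Ioc (-(1 / 2) : ℝ) (1 / 2))
    (K : ℤ) (hsum : ∑ j, b j = (K : ℝ)) :
    ∃ a : Fin n → ℝ,
      (∀ j, ∃ m : ℤ, a j - b j = (m : ℝ)) ∧
      (∑ j, a j = 0) ∧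
      (∀ j, |a j| < 1) ∧
      (∀ j k, a j - a k < 1) := by
  classical
  have hne : Nonempty (Fin n) := ⟨⟨0, hn⟩⟩
  set σ := Tuple.sort b with hσ
  set g : Fin n → ℝ := b ∘ σ with hg
  have hgmono : Monotone g := Tuple.monotone_sort b
  have hginj : Function.Injective g := hb.comp σ.injective
  have hgsm : StrictMono g := hgmono.strictMono_of_injective hginj
  have hgmem : ∀ i, g i ∈ Set.Ioc (-(1 / 2) : ℝ) (1 / 2) := fun i => hmem _
  have hgsum : ∑ i, g i = (K : ℝ) := by
    rw [← hsum]; exact Equiv.sum_comp σ b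
  -- bounds on K
  have hKle : (K : ℝ) ≤ n / 2 := by
    rw [← hsum]
    calc ∑ j, b j ≤ ∑ _j : Fin n, (1 / 2 : ℝ) :=
          Finset.sum_le_sum fun j _ => (hmem j).2
      _ = n / 2 := by simp; ring
  have hKgt : -(n / 2 : ℝ) < (K : ℝ) := by
    rw [← hsum]
    have : ∑ _j : Fin n, (-(1 / 2) : ℝ) < ∑ j, b j :=
      Finset.sum_lt_sum_of_nonempty Finset.univ_nonempty fun j _ => (hmem j).1
    calc -(n / 2 : ℝ) = ∑ _j : Fin n, (-(1 / 2) : ℝ) := by simp; ring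
      _ < ∑ j, b j := this
  have h2Kn : 2 * K ≤ (n : ℤ) := by
    have : (2 * K : ℝ) ≤ (n : ℝ) := by linarith
    exact_mod_cast this
  have h2Kn' : -(n : ℤ) < 2 * K := by
    have : -(n : ℝ) < (2 * K : ℝ) := by linarith
    exact_mod_cast this
  rcases lt_trichotomy K 0 with hK | hK | hK
  · -- K < 0 : add 1 to the bottom (−K) entries
    set k : ℕ := (-K).toNat with hkdef
    have hk1 : 1 ≤ k := by omega
    have hkn : k < n := by omega
    have hKk : (K : ℝ) = -(k : ℝ) := by
      have h0 : (k : ℤ) = -K := by omega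
      have h1 := congrArg (fun z : ℤ => (z : ℝ)) h0
      push_cast at h1
      linarith
    set u : Fin n := ⟨k - 1, by omega⟩ with hu
    -- key negativity: g u < 0
    have hneg : g u < 0 := by
      by_contra h
      push_neg at h
      have hsplit := Finset.sum_filter_add_sum_filter_not Finset.univ
        (fun j : Fin n => j < u) g
      have h1 : -((k : ℝ) - 1) / 2 ≤ ∑ j ∈ Finset.univ.filter (fun j : Fin n => j < u), g j := by
        have hcard : (Finset.univ.filter (fun j : Fin n => j < u)).card = k - 1 := by
          have : Finset.univ.filter (fun j : Fin n => j < u) = Finset.Iio u := by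
            ext x; simp
          rw [this, Fin.card_Iio]
        have hle := Finset.card_nsmul_le_sum (Finset.univ.filter (fun j : Fin n => j < u))
          g (-(1 / 2 : ℝ)) (fun j _ => le_of_lt (hgmem j).1)
        rw [hcard, nsmul_eq_mul] at hle
        have hcast : ((k - 1 : ℕ) : ℝ) = (k : ℝ) - 1 := by
          push_cast [Nat.cast_sub hk1]; ring
        rw [hcast] at hle
        linarith
      have h2 : (0 : ℝ) ≤ ∑ j ∈ Finset.univ.filter (fun j : Fin n => ¬ j < u), g j := by
        apply Finset.sum_nonneg
        intro j hj
        have : u ≤ j := not_lt.mp (Finset.mem_filter.mp hj).2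
        exact le_trans h (hgmono this)
      have : -((k : ℝ) - 1) / 2 ≤ (K : ℝ) := by
        rw [← hgsum, ← hsplit]; linarith
      rw [hKk] at this
      have : (1 : ℝ) ≤ (k : ℝ) := by exact_mod_cast hk1
      linarith
    refine ⟨fun j => b j + (if σ.symm j < u ∨ σ.symm j = u then 1 else 0), ?_, ?_, ?_, ?_⟩
    · intro j
      by_cases h : σ.symm j < u ∨ σ.symm j = u
      · exact ⟨1, by simp [h]⟩
      · exact ⟨0, by simp [h]⟩
    · have hre : ∑ j, (b j + (if σ.symm j < u ∨ σ.symm j = u then (1:ℝ) else 0))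
          = ∑ j, b j + ∑ i : Fin n, (if i < u ∨ i = u then (1:ℝ) else 0) := by
        rw [Finset.sum_add_distrib]
        congr 1
        exact (Equiv.sum_comp σ.symm (fun i => if i < u ∨ i = u then (1:ℝ) else 0))
      rw [hre, hsum]
      have : ∑ i : Fin n, (if i < u ∨ i = u then (1:ℝ) else 0) = k := by
        rw [Finset.sum_boole]
        have : Finset.univ.filter (fun i : Fin n => i < u ∨ i = u) = Finset.Iic u := by
          ext x; simp [le_iff_lt_or_eq]
        rw [this, Fin.card_Iic]
        have h2 : ((u : ℕ) + 1) = k := by simp only [hu]; omega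
        rw [h2]
      rw [this, hKk]; ring
    · intro j
      dsimp only
      set i := σ.symm j with hi
      have hbj : b j = g i := by
        rw [hg]; simp [hi]
      rw [hbj]
      by_cases h : i < u ∨ i = u
      · have hgi : g i < 0 := by
          rcases h with h | h
          · exact lt_of_le_of_lt (hgmono h.le) hneg
          · rw [h]; exact hneg
        have := (hgmem i).1
        rw [if_pos h, abs_lt]
        constructor <;> linarith
      · have := (hgmem i).1
        have := (hgmem i).2
        rw [if_neg h, abs_lt]
        constructor <;> linarith
    · intro j j'
      dsimp only
      set i := σ.symm j with hi
      set i' := σ.symm j' with hi'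
      have hbj : b j = g i := by rw [hg]; simp [hi]
      have hbj' : b j' = g i' := by rw [hg]; simp [hi']
      rw [hbj, hbj']
      have hib := hgmem i
      have hib' := hgmem i'
      by_cases h : i < u ∨ i = u <;> by_cases h' : i' < u ∨ i' = u
      · -- both low: g i - g i' < 1
        simp only [if_pos h, if_pos h']
        have := hib.1; have := hib'.1; have := hib.2; have := hib'.2
        linarith
      · -- i low, i' not: (g i + 1) - g i' < 1 ⇔ g i < g i'
        simp only [if_pos h, if_neg h']
        have hii' : i < i' := by
          have h1 : i ≤ u := le_iff_lt_or_eq.mpr h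
          have h2 : u < i' := by
            rcases lt_trichotomy i' u with hc | hc | hc
            · exact absurd (Or.inl hc) h'
            · exact absurd (Or.inr hc) h'
            · exact hc
          exact lt_of_le_of_lt h1 h2
        have := hgsm hii'
        linarith
      · -- i not, i' low: g i - (g i' + 1) < 1
        simp only [if_neg h, if_pos h']
        have hgi' : g i' < 0 := by
          rcases h' with hc | hc
          · exact lt_of_le_of_lt (hgmono hc.le) hneg
          · rw [hc]; exact hneg
        have := hib.2; have := hib'.1
        linarith
      · simp only [if_neg h, if_neg h']
        have := hib.2; have := hib'.1
        linarith
  · -- K = 0 : take a = b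
    refine ⟨b, fun j => ⟨0, by simp⟩, by rw [hsum, hK]; simp, ?_, ?_⟩
    · intro j
      have h1 := (hmem j).1; have h2 := (hmem j).2
      rw [abs_lt]; constructor <;> linarith
    · intro j j'
      have h1 := (hmem j').1; have h2 := (hmem j).2
      linarith
  · -- K > 0 : subtract 1 from the top K entries
    set k : ℕ := K.toNat with hkdef
    have hk1 : 1 ≤ k := by omega
    have hkn : k ≤ n := by omega
    have hKk : (K : ℝ) = (k : ℝ) := by
      have h0 : (k : ℤ) = K := by omega
      have h1 := congrArg (fun z : ℤ => (z : ℝ)) h0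
      push_cast at h1
      linarith
    set t : Fin n := ⟨n - k, by omega⟩ with ht
    -- key positivity: 0 < g t
    have hpos : 0 < g t := by
      by_contra h
      push_neg at h
      have hsplit := Finset.sum_filter_add_sum_filter_not Finset.univ
        (fun j : Fin n => j ≤ t) g
      have h1 : ∑ j ∈ Finset.univ.filter (fun j : Fin n => j ≤ t), g j ≤ 0 :=
        Finset.sum_nonpos fun j hj =>
          le_trans (hgmono (Finset.mem_filter.mp hj).2) h
      have h2 : ∑ j ∈ Finset.univ.filter (fun j : Fin n => ¬ j ≤ t), g j
          ≤ ((k : ℝ) - 1) / 2 := by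
        have hcard : (Finset.univ.filter (fun j : Fin n => ¬ j ≤ t)).card = k - 1 := by
          have : Finset.univ.filter (fun j : Fin n => ¬ j ≤ t) = Finset.Ioi t := by
            ext x; simp
          rw [this, Fin.card_Ioi]
          simp [ht]
          omega
        have hle := Finset.sum_le_card_nsmul (Finset.univ.filter (fun j : Fin n => ¬ j ≤ t))
          g (1 / 2 : ℝ) (fun j _ => (hgmem j).2)
        rw [hcard, nsmul_eq_mul] at hle
        have hcast : ((k - 1 : ℕ) : ℝ) = (k : ℝ) - 1 := by
          push_cast [Nat.cast_sub hk1]; ring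
        rw [hcast] at hle
        linarith
      have : (K : ℝ) ≤ ((k : ℝ) - 1) / 2 := by
        rw [← hgsum, ← hsplit]; linarith
      rw [hKk] at this
      have : (1 : ℝ) ≤ (k : ℝ) := by exact_mod_cast hk1
      linarith
    refine ⟨fun j => b j - (if t ≤ σ.symm j then 1 else 0), ?_, ?_, ?_, ?_⟩
    · intro j
      by_cases h : t ≤ σ.symm j
      · exact ⟨-1, by simp [h]⟩
      · exact ⟨0, by simp [h]⟩
    · have hre : ∑ j, (b j - (if t ≤ σ.symm j then (1:ℝ) else 0))
          = ∑ j, b j - ∑ i : Fin n, (if t ≤ i then (1:ℝ) else 0) := by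
        rw [Finset.sum_sub_distrib]
        congr 1
        exact (Equiv.sum_comp σ.symm (fun i => if t ≤ i then (1:ℝ) else 0))
      rw [hre, hsum]
      have : ∑ i : Fin n, (if t ≤ i then (1:ℝ) else 0) = k := by
        rw [Finset.sum_boole]
        have : Finset.univ.filter (fun i : Fin n => t ≤ i) = Finset.Ici t := by
          ext x; simp
        rw [this, Fin.card_Ici]
        have h2 : (n - (t : ℕ)) = k := by simp only [ht]; omega
        rw [h2]
      rw [this, hKk]; ring
    · intro j
      dsimp only
      set i := σ.symm j with hi
      have hbj : b j = g i := by rw [hg]; simp [hi]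
      rw [hbj]
      by_cases h : t ≤ i
      · have hgi : 0 < g i := lt_of_lt_of_le hpos (hgmono h)
        have := (hgmem i).2
        rw [if_pos h, abs_lt]
        constructor <;> linarith
      · have := (hgmem i).1
        have := (hgmem i).2
        rw [if_neg h, abs_lt]
        constructor <;> linarith
    · intro j j'
      dsimp only
      set i := σ.symm j with hi
      set i' := σ.symm j' with hi'
      have hbj : b j = g i := by rw [hg]; simp [hi]
      have hbj' : b j' = g i' := by rw [hg]; simp [hi']
      rw [hbj, hbj']
      have hib := hgmem i
      have hib' := hgmem i'
      by_cases h : t ≤ i <;> by_cases h' : t ≤ i'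
      · -- both high: g i - g i' < 1
        simp only [if_pos h, if_pos h']
        have hgi' : 0 < g i' := lt_of_lt_of_le hpos (hgmono h')
        have := hib.2
        linarith
      · -- i high, i' not
        simp only [if_pos h, if_neg h']
        have := hib.2; have := hib'.1
        linarith
      · -- i not, i' high: g i - (g i' - 1) < 1 ⇔ g i < g i'
        simp only [if_neg h, if_pos h']
        have hii' : i < i' := lt_of_lt_of_le (not_le.mp h) h'
        have := hgsm hii'
        linarith
      · simp only [if_neg h, if_neg h']
        have := hib.2; have := hib'.1
        linarith
end

section
/- Let n ≥ 2 and let h_1, …, h_n : [0,1] → ℝ be continuous functions such that Σ_{j=1}^n h_j(t) = 0 for every t ∈ [0,1], such that h_j(t) − h_k(t) is never an integer for any j ≠ k and any t ∈ [0,1], and such that max_j h_j(0) − min_j h_j(0) < 1. Then max_j h_j(t) − min_j h_j(t) < 1 for every t ∈ [0,1], and consequently |h_j(t)| < 1 for every j and every t ∈ [0,1]. -/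
/-- Let `n ≥ 2` and `h₁, …, hₙ : [0,1] → ℝ` be continuous with
`Σⱼ hⱼ(t) = 0` for all `t`, with `hⱼ(t) − h_k(t)` never an integer for `j ≠ k`, and
with `maxⱼ hⱼ(0) − minⱼ hⱼ(0) < 1`. Then `maxⱼ hⱼ(t) − minⱼ hⱼ(t) < 1` for all `t`,
and consequently `|hⱼ(t)| < 1` for all `j, t`. -/
theorem eigenvalue_functions_spread_bound (n : ℕ) (hn : 2 ≤ n)
    (h : Fin n → C(unitInterval, ℝ))
    (hsum : ∀ t, ∑ j, h j t = 0)
    (hdiff : ∀ j k, j ≠ k → ∀ t, ∀ m : ℤ, h j t - h k t ≠ (m : ℝ))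
    (h0 : ∀ j k, h j 0 - h k 0 < 1) :
    (∀ t, ∀ j k, h j t - h k t < 1) ∧ (∀ j, ∀ t, |h j t| < 1) := by
  haveI : Nonempty (Fin n) := Fin.pos_iff_nonempty.mp (lt_of_lt_of_le two_pos hn)
  have main : ∀ t, ∀ j k, h j t - h k t < 1 := by
    intro t j k
    rcases eq_or_ne j k with rfl | hjk
    · simp
    by_contra hge
    push_neg at hge
    have hc : Continuous fun s : unitInterval => h j s - h k s :=
      (h j).continuous.sub (h k).continuous
    have h1mem : (1:ℝ) ∈ Set.Icc (h j 0 - h k 0) (h j t - h k t) := ⟨(h0 j k).le, hge⟩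
    obtain ⟨s, hs⟩ := intermediate_value_univ 0 t hc h1mem
    exact hdiff j k hjk s 1 (by simpa using hs)
  refine ⟨main, fun j t => ?_⟩
  have hnpos : (0:ℝ) < n := by positivity
  have sum1 : ∀ i, ∑ k, (h i t - h k t) = n * h i t := by
    intro i
    rw [Finset.sum_sub_distrib, hsum t, Finset.sum_const, Finset.card_univ,
      Fintype.card_fin, nsmul_eq_mul]
    ring
  have hlt1 : (n:ℝ) * h j t < n := by
    calc (n:ℝ) * h j t = ∑ k, (h j t - h k t) := (sum1 j).symm
    _ < ∑ _k : Fin n, (1:ℝ) :=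
        Finset.sum_lt_sum_of_nonempty Finset.univ_nonempty (fun k _ => main t j k)
    _ = n := by simp
  have hlt2 : (n:ℝ) * (-(h j t)) < n := by
    have : ∑ k, (h k t - h j t) = (n:ℝ) * (-(h j t)) := by
      have := sum1 j
      have e : ∑ k, (h k t - h j t) = -∑ k, (h j t - h k t) := by
        rw [← Finset.sum_neg_distrib]; congr 1; ext k; ring
      rw [e, this]; ring
    calc (n:ℝ) * (-(h j t)) = ∑ k, (h k t - h j t) := this.symm
    _ < ∑ _k : Fin n, (1:ℝ) :=
        Finset.sum_lt_sum_of_nonempty Finset.univ_nonempty (fun k _ => main t k j)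
    _ = n := by simp
  rw [abs_lt]
  constructor
  · nlinarith
  · nlinarith
end
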